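/- arXiv:2006.16089 — 2 statements merged into one kernel-verified Lean document; each statement's English description precedes it below -/
import Mathlib

section
/- For any prime p and positive integer a, the Bell polynomial satisfies B_{p^a}(x) ≡ ∑_{r=0}^{a} x^{p^r} modulo p·Z_p[x]. -/
/-- Stirling numbers of the second kind. -/
def stirling2 : ℕ → ℕ → ℕ
  | 0, 0 => 1
  | 0, _ + 1 => 0
  | _ + 1, 0 => 0
  | n + 1, k + 1 => (k + 1) * stirling2 n (k + 1) + stirling2 n k

/-- The Bell polynomial `B_n(x) = ∑_{k=0}^n S(n,k) x^k`. -/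
noncomputable def bellPoly (R : Type*) [CommRing R] (n : ℕ) : Polynomial R :=
  ∑ k ∈ Finset.range (n + 1), Polynomial.C (stirling2 n k : R) * Polynomial.X ^ k

/-!
Let `φ` be the linear map `X ^ k ↦ (X)_k := X (X - 1) ⋯ (X - k + 1)`. The expansion
`X ^ n = ∑ S(n, k) (X)_k` says `φ (B_n) = X ^ n`, and `φ` is injective because it preserves
leading coefficients. Over `𝔽_p` we have `(X)_p = X ^ p - X`, and `(X)_{m + p} = (X)_m (X - m)_p`
with `(X - m)_p = (X)_p` when `p ∣ m`; hence
`(X)_{p ^ (r + 1)} = (X ^ p - X) ^ p ^ r = X ^ p ^ (r + 1) - X ^ p ^ r`. So `∑_{r ≤ a} (X)_{p ^ r}`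
telescopes to `X ^ p ^ a = φ (B_{p ^ a})`.
-/

open Polynomial Finset

theorem stirling2_eq_stirlingSecond : stirling2 = Nat.stirlingSecond := by
  funext n k
  induction n generalizing k with
  | zero => cases k <;> rfl
  | succ n ih => cases k <;> simp [stirling2, Nat.stirlingSecond, ih]

section descPochhammer

variable (R : Type*) [CommRing R]

theorem sum_stirling2_smul_descPochhammer (n : ℕ) :
    ∑ k ∈ range (n + 1), (stirling2 n k : R) • descPochhammer R k = X ^ n := by
  induction n with
  | zero => simp [stirling2]
  | succ n ih =>
    have hX (k : ℕ) :
        X * descPochhammer R k = descPochhammer R (k + 1) + (k : R) • descPochhammer R k := by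
      rw [descPochhammer_succ_right, Polynomial.smul_eq_C_mul, C_eq_natCast]; ring
    have hshift : ∑ k ∈ range (n + 1), ((stirling2 n k : R) * k) • descPochhammer R k =
        ∑ k ∈ range (n + 1),
          ((stirling2 n (k + 1) : R) * (k + 1 : ℕ)) • descPochhammer R (k + 1) := by
      rw [sum_range_succ', sum_range_succ (fun k => _ • descPochhammer R (k + 1))]
      simp [stirling2_eq_stirlingSecond, Nat.stirlingSecond_eq_zero_of_lt n.lt_succ_self]
    rw [pow_succ', ← ih, mul_sum]
    simp_rw [mul_smul_comm, hX, smul_add, smul_smul, sum_add_distrib, hshift]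
    rw [sum_range_succ' _ (n + 1)]
    simp [stirling2_eq_stirlingSecond, Nat.stirlingSecond_succ_succ, add_smul, sum_add_distrib,
      mul_comm, add_comm]

noncomputable def descPochhammerLinearMap : R[X] →ₗ[R] R[X] :=
  lsum fun k => LinearMap.toSpanSingleton R R[X] (descPochhammer R k)

variable {R}

@[simp]
theorem descPochhammerLinearMap_monomial (k : ℕ) (c : R) :
    descPochhammerLinearMap R (monomial k c) = c • descPochhammer R k := by
  simp [descPochhammerLinearMap]

theorem descPochhammerLinearMap_X_pow (k : ℕ) :
    descPochhammerLinearMap R (X ^ k) = descPochhammer R k := by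
  rw [← monomial_one_right_eq_X_pow, descPochhammerLinearMap_monomial, one_smul]

theorem descPochhammerLinearMap_bellPoly (n : ℕ) :
    descPochhammerLinearMap R (bellPoly R n) = X ^ n := by
  simp only [bellPoly, map_sum, C_mul_X_pow_eq_monomial, descPochhammerLinearMap_monomial]
  exact sum_stirling2_smul_descPochhammer R n

theorem coeff_descPochhammerLinearMap_natDegree [IsDomain R] (f : R[X]) :
    (descPochhammerLinearMap R f).coeff f.natDegree = f.leadingCoeff := by
  rw [descPochhammerLinearMap, lsum_apply, Polynomial.sum_def, finsetSum_coeff,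
    sum_eq_single f.natDegree]
  · have h := (monic_descPochhammer R f.natDegree).coeff_natDegree
    rw [descPochhammer_natDegree] at h
    simp [h]
  · intro k hk hkd
    have hlt : (descPochhammer R k).natDegree < f.natDegree := by
      rw [descPochhammer_natDegree]; exact (le_natDegree_of_mem_supp k hk).lt_of_ne hkd
    simp [coeff_eq_zero_of_natDegree_lt hlt]
  · intro h
    simp [notMem_support_iff.1 h]

theorem descPochhammerLinearMap_injective [IsDomain R] :
    Function.Injective (descPochhammerLinearMap R) := by
  refine (injective_iff_map_eq_zero _).2 fun f hf => ?_
  rw [← leadingCoeff_eq_zero, ← coeff_descPochhammerLinearMap_natDegree, hf, coeff_zero]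

end descPochhammer

section CharP

variable (p : ℕ) [Fact p.Prime]

theorem descPochhammer_zmod_prime : descPochhammer (ZMod p) p = X ^ p - X := by
  have hp : 1 < p := (Fact.out : p.Prime).one_lt
  have hdeg : (descPochhammer (ZMod p) p).degree = p := by
    rw [degree_eq_natDegree (monic_descPochhammer _ p).ne_zero, descPochhammer_natDegree]
  have hX : (X : (ZMod p)[X]).degree < (X ^ p : (ZMod p)[X]).degree := by
    rw [degree_X_pow, degree_X]; exact_mod_cast hp
  refine eq_of_degree_le_of_eval_finset_eq univ ?_ ?_ ?_ fun x _ => ?_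
  · simp [hdeg]
  · rw [hdeg, degree_sub_eq_left_of_degree_lt hX, degree_X_pow]
  · rw [(monic_descPochhammer _ p).leadingCoeff, leadingCoeff_sub_of_degree_lt hX,
      leadingCoeff_X_pow]
  · rw [descPochhammer_eval_eq_prod_range, eval_sub, eval_pow, eval_X, ZMod.pow_card, sub_self]
    exact prod_eq_zero (mem_range.2 x.val_lt) (by simp)

theorem descPochhammer_zmod_prime_mul (k : ℕ) :
    descPochhammer (ZMod p) (p * k) = (X ^ p - X) ^ k := by
  induction k with
  | zero => simp
  | succ k ih =>
    have hshift : ((p * k : ℕ) : (ZMod p)[X]) = 0 := by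
      rw [Nat.cast_mul, CharP.cast_eq_zero, zero_mul]
    rw [Nat.mul_succ, ← descPochhammer_mul, hshift, sub_zero, comp_X, ih,
      descPochhammer_zmod_prime, pow_succ]

theorem descPochhammer_zmod_prime_pow_succ (a : ℕ) :
    descPochhammer (ZMod p) (p ^ (a + 1)) = X ^ p ^ (a + 1) - X ^ p ^ a := by
  rw [pow_succ', descPochhammer_zmod_prime_mul, sub_pow_char_pow, ← pow_mul, ← pow_succ']

theorem sum_descPochhammer_zmod_prime_pow (a : ℕ) :
    ∑ r ∈ range (a + 1), descPochhammer (ZMod p) (p ^ r) = X ^ p ^ a := by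
  induction a with
  | zero => simp
  | succ a ih => rw [sum_range_succ, ih, descPochhammer_zmod_prime_pow_succ, add_sub_cancel]

theorem bellPoly_zmod_prime_pow (a : ℕ) :
    bellPoly (ZMod p) (p ^ a) = ∑ r ∈ range (a + 1), X ^ p ^ r := by
  apply descPochhammerLinearMap_injective
  simp only [descPochhammerLinearMap_bellPoly, map_sum, descPochhammerLinearMap_X_pow]
  exact (sum_descPochhammer_zmod_prime_pow p a).symm

end CharP

theorem bellPoly_map {R S : Type*} [CommRing R] [CommRing S] (f : R →+* S) (n : ℕ) :
    (bellPoly R n).map f = bellPoly S n := by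
  simp [bellPoly, Polynomial.map_sum]

theorem PadicInt.natCast_dvd_iff_map_toZMod_eq_zero {p : ℕ} [Fact p.Prime] (f : ℤ_[p][X]) :
    (p : ℤ_[p][X]) ∣ f ↔ f.map PadicInt.toZMod = 0 := by
  have hdvd (c : ℤ_[p]) : (p : ℤ_[p]) ∣ c ↔ PadicInt.toZMod c = 0 := by
    rw [← RingHom.mem_ker, PadicInt.ker_toZMod, PadicInt.maximalIdeal_eq_span_p,
      Ideal.mem_span_singleton]
  rw [← map_natCast C, C_dvd_iff_dvd_coeff, Polynomial.ext_iff]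
  simp [hdvd, coeff_map]

open Polynomial in
theorem bellPoly_prime_pow_general (p : ℕ) [Fact p.Prime] (a : ℕ) :
    (p : Polynomial ℤ_[p]) ∣
      bellPoly ℤ_[p] (p ^ a) - ∑ r ∈ Finset.range (a + 1), X ^ (p ^ r) := by
  rw [PadicInt.natCast_dvd_iff_map_toZMod_eq_zero, Polynomial.map_sub, bellPoly_map,
    bellPoly_zmod_prime_pow, sub_eq_zero]
  simp [Polynomial.map_sum]

open Polynomial in
/-- For a prime `p` and `a ≥ 1`, `B_{p^a}(x) ≡ ∑_{r=0}^a x^{p^r}` mod `p·ℤ_p[x]`. -/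
theorem bellPoly_prime_pow (p : ℕ) [Fact p.Prime] (a : ℕ) (ha : 0 < a) :
    (p : Polynomial ℤ_[p]) ∣
      bellPoly ℤ_[p] (p ^ a) - ∑ r ∈ Finset.range (a + 1), X ^ (p ^ r) :=
  bellPoly_prime_pow_general p a
end

section
/- For any prime p, positive integers a and n with p ∤ n and p ∤ (n+1), the following identity of truncated geometric-type sums holds in Z_p: -n·∑_{k=1}^{p^a-1} B_k(x)/(-n)^k ≡ ∑_{k=1}^{p^a-1} B_k(x)·x/(-n-1)^k - x·∑_{l=1}^{p^a-1} B_l(x)/(-1)^l (mod p·Z_p[x]), i.e., the inductive step relation relating the sum at n+1 to the sum at n. -/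
open Finset Polynomial Nat

theorem stirling2_eq_stirlingSecond_s13 : ∀ n k, stirling2 n k = stirlingSecond n k
  | 0, 0 | 0, _ + 1 | _ + 1, 0 => rfl
  | n + 1, k + 1 => by
    rw [stirling2, stirlingSecond_succ_succ, stirling2_eq_stirlingSecond_s13 n (k + 1),
      stirling2_eq_stirlingSecond_s13 n k]

theorem sum_range_succ_choose_succ_mul (n : ℕ) (f : ℕ → ℕ) :
    ∑ j ∈ range (n + 2), (n + 1).choose j * f j
      = ∑ j ∈ range (n + 1), n.choose j * (f j + f (j + 1)) := by
  have hshift : ∑ j ∈ range (n + 1), n.choose (j + 1) * f (j + 1) + f 0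
      = ∑ j ∈ range (n + 1), n.choose j * f j := by
    have h := sum_range_succ' (fun j => n.choose j * f j) (n + 1)
    rw [sum_range_succ, choose_succ_self, zero_mul, add_zero, choose_zero_right, one_mul] at h
    exact h.symm
  rw [sum_range_succ', choose_zero_right, one_mul]
  simp only [choose_succ_succ, add_mul, mul_add, sum_add_distrib]
  rw [add_assoc, hshift, add_comm]

theorem sum_range_choose_mul_stirlingSecond (n : ℕ) : ∀ l,
    ∑ j ∈ range (n + 1), n.choose j * stirlingSecond j l = stirlingSecond (n + 1) (l + 1) := by
  induction n with
  | zero => intro l; cases l <;> rfl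
  | succ n ih =>
    intro l
    rw [sum_range_succ_choose_succ_mul]
    simp only [mul_add, sum_add_distrib, ih]
    cases l with
    | zero => simp [stirlingSecond_succ_succ (n + 1) 0]
    | succ l =>
      simp only [stirlingSecond_succ_succ _ l, mul_add, sum_add_distrib, mul_left_comm _ (l + 1),
        ← mul_sum, ih, stirlingSecond_succ_succ (n + 1) (l + 1)]
      ring

theorem sum_Icc_one_eq_sum_range {M : Type*} [AddCommMonoid M] (f : ℕ → M) (m : ℕ) :
    ∑ k ∈ Icc 1 m, f k = ∑ i ∈ range m, f (i + 1) := by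
  rw [← Ico_add_one_right_eq_Icc, sum_Ico_eq_sum_range, add_tsub_cancel_right]
  simp only [add_comm 1]

section

variable {R : Type*} [CommRing R]

theorem coeff_bellPoly (n l : ℕ) : (bellPoly R n).coeff l = stirlingSecond n l := by
  simp only [bellPoly, finsetSum_coeff, coeff_C_mul_X_pow, stirling2_eq_stirlingSecond_s13]
  rw [sum_ite_eq]
  split_ifs with h
  · rfl
  · rw [stirlingSecond_eq_zero_of_lt (by simpa using h), Nat.cast_zero]

theorem map_bellPoly {S : Type*} [CommRing S] (f : R →+* S) (n : ℕ) :
    (bellPoly R n).map f = bellPoly S n := by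
  ext l
  rw [coeff_map, coeff_bellPoly, coeff_bellPoly, map_natCast]

theorem bellPoly_succ (n : ℕ) :
    bellPoly R (n + 1) = X * ∑ j ∈ range (n + 1), C (n.choose j : R) * bellPoly R j := by
  ext l
  cases l with
  | zero => simp [coeff_bellPoly]
  | succ l =>
    simp only [coeff_X_mul, finsetSum_coeff, coeff_C_mul, coeff_bellPoly,
      ← sum_range_choose_mul_stirlingSecond n l]
    push_cast
    rfl

theorem sum_range_pow_succ_mul_bellPoly_succ (t : R) (m : ℕ) :
    ∑ i ∈ range m, C (t ^ (i + 1)) * bellPoly R (i + 1)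
      = X * ∑ j ∈ range m, C (t * ∑ i ∈ range m, (i.choose j : R) * t ^ i) * bellPoly R j := by
  have hext : ∀ i < m, ∑ j ∈ range (i + 1), C (i.choose j : R) * bellPoly R j
      = ∑ j ∈ range m, C (i.choose j : R) * bellPoly R j := fun i hi =>
    sum_subset (range_subset_range.2 hi) fun j _ hj => by
      rw [choose_eq_zero_of_lt (by simpa using hj), Nat.cast_zero, map_zero, zero_mul]
  calc ∑ i ∈ range m, C (t ^ (i + 1)) * bellPoly R (i + 1)
      = ∑ i ∈ range m, ∑ j ∈ range m, X * (C (t * ((i.choose j : R) * t ^ i)) * bellPoly R j) :=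
        sum_congr rfl fun i hi => by
          rw [bellPoly_succ, hext i (mem_range.1 hi), mul_sum, mul_sum]
          refine sum_congr rfl fun j _ => ?_
          simp only [map_mul, map_pow]
          ring
    _ = X * ∑ j ∈ range m, C (t * ∑ i ∈ range m, (i.choose j : R) * t ^ i) * bellPoly R j := by
        rw [sum_comm, mul_sum]
        simp only [mul_sum, map_sum, sum_mul]

theorem one_sub_mul_sum_range_choose_succ_mul_pow (t : R) (j N : ℕ) :
    (1 - t) * ∑ k ∈ range N, (k.choose (j + 1) : R) * t ^ k
      = t * ∑ k ∈ range N, (k.choose j : R) * t ^ k - (N.choose (j + 1) : R) * t ^ N := by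
  induction N with
  | zero => simp
  | succ N ih =>
    rw [sum_range_succ, sum_range_succ, mul_add, mul_add, ih, choose_succ_succ, cast_add]
    ring

end

section

variable {p : ℕ} [Fact p.Prime]

theorem cast_choose_prime_pow_sub_one {a j : ℕ} (hj : j < p ^ a) :
    ((p ^ a - 1).choose j : ZMod p) = (-1) ^ j := by
  induction j with
  | zero => simp
  | succ j ih =>
    have h := (Fact.out : p.Prime).dvd_choose_pow (succ_ne_zero j) hj.ne
    rw [← ZMod.natCast_eq_zero_iff, show p ^ a = (p ^ a - 1) + 1 by omega, choose_succ_succ,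
      cast_add, ih (by omega)] at h
    rw [pow_succ]
    linear_combination h

theorem ZMod.pow_prime_pow_sub_one {u : ZMod p} (hu : u ≠ 0) (a : ℕ) : u ^ (p ^ a - 1) = 1 := by
  rw [pow_sub₀ u hu (one_le_pow a p (Fact.out : p.Prime).pos), ZMod.pow_card_pow, pow_one,
    mul_inv_cancel₀ hu]

theorem sum_range_prime_pow_choose_mul_pow {t : ZMod p} (ht : t ≠ 1) {a j : ℕ} (hj : j < p ^ a) :
    ∑ k ∈ range (p ^ a), (k.choose j : ZMod p) * t ^ k = (t * (1 - t)⁻¹) ^ j := by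
  have h1t : 1 - t ≠ 0 := sub_ne_zero.2 (Ne.symm ht)
  induction j with
  | zero =>
    simp only [choose_zero_right, cast_one, one_mul, pow_zero]
    rw [geom_sum_eq ht, ZMod.pow_card_pow, div_self (sub_ne_zero.2 ht)]
  | succ j ih =>
    have h := one_sub_mul_sum_range_choose_succ_mul_pow t j (p ^ a)
    rw [ih (by omega), (ZMod.natCast_eq_zero_iff _ p).2
      ((Fact.out : p.Prime).dvd_choose_pow (succ_ne_zero j) hj.ne), zero_mul, sub_zero] at h
    rw [← inv_mul_cancel_left₀ h1t (∑ k ∈ range (p ^ a), _), h]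
    ring

theorem sum_range_prime_pow_sub_one_choose_mul_pow {t : ZMod p} (ht0 : t ≠ 0) (ht1 : t ≠ 1)
    {a j : ℕ} (hj : j < p ^ a) :
    ∑ k ∈ range (p ^ a - 1), (k.choose j : ZMod p) * t ^ k = (t * (1 - t)⁻¹) ^ j - (-1) ^ j := by
  have h := sum_range_prime_pow_choose_mul_pow ht1 hj
  rw [show p ^ a = p ^ a - 1 + 1 by omega, sum_range_succ, cast_choose_prime_pow_sub_one (by omega),
    ZMod.pow_prime_pow_sub_one ht0, mul_one] at h
  rw [← h, add_sub_cancel_right]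

theorem C_mul_sum_inv_pow_mul_bellPoly {u : ZMod p} (hu0 : u ≠ 0) (hu1 : u ≠ 1) (a : ℕ) :
    C u * ∑ k ∈ Icc 1 (p ^ a - 1), C ((u ^ k)⁻¹) * bellPoly (ZMod p) k
      = ∑ k ∈ Icc 1 (p ^ a - 1), bellPoly (ZMod p) k * X * C (((u - 1) ^ k)⁻¹)
        - X * ∑ l ∈ Icc 1 (p ^ a - 1), C (((-1) ^ l)⁻¹) * bellPoly (ZMod p) l := by
  set m := p ^ a - 1
  have hu1' : u - 1 ≠ 0 := sub_ne_zero.2 hu1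
  have hinv : u⁻¹ * (1 - u⁻¹)⁻¹ = (u - 1)⁻¹ := by field_simp
  set g : ℕ → (ZMod p)[X] := fun j => C ((u - 1)⁻¹ ^ j - (-1) ^ j) * bellPoly (ZMod p) j
    with hg
  have hlhs : C u * ∑ k ∈ Icc 1 m, C ((u ^ k)⁻¹) * bellPoly (ZMod p) k
      = X * ∑ j ∈ range m, g j := by
    simp only [sum_Icc_one_eq_sum_range, ← inv_pow, sum_range_pow_succ_mul_bellPoly_succ]
    rw [mul_left_comm, mul_sum]
    refine congrArg _ (sum_congr rfl fun j hj => ?_)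
    have hjq : j < p ^ a := (mem_range.1 hj).trans_le (Nat.sub_le _ _)
    rw [sum_range_prime_pow_sub_one_choose_mul_pow (inv_ne_zero hu0)
      (fun h => hu1 (inv_eq_one.1 h)) hjq, hinv, ← mul_assoc, ← map_mul, ← mul_assoc,
      mul_inv_cancel₀ hu0, one_mul]
  have hrhs : ∑ k ∈ Icc 1 m, bellPoly (ZMod p) k * X * C (((u - 1) ^ k)⁻¹)
        - X * ∑ l ∈ Icc 1 m, C (((-1) ^ l)⁻¹) * bellPoly (ZMod p) l
      = X * ∑ i ∈ range m, g (i + 1) := by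
    simp only [sum_Icc_one_eq_sum_range, mul_sum, ← sum_sub_distrib]
    refine sum_congr rfl fun i _ => ?_
    simp only [hg, ← inv_pow (-1 : ZMod p), inv_neg, inv_one, inv_pow, map_sub]
    ring
  have hshift : ∑ j ∈ range m, g j = ∑ i ∈ range m, g (i + 1) := by
    have h0 : g 0 = 0 := by simp [hg]
    have hsm : (u - 1)⁻¹ ^ m = 1 := ZMod.pow_prime_pow_sub_one (inv_ne_zero hu1') a
    have hnm : (-1 : ZMod p) ^ m = 1 := ZMod.pow_prime_pow_sub_one (neg_ne_zero.2 one_ne_zero) a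
    have hm : g m = 0 := by simp only [hg, hsm, hnm, sub_self, map_zero, zero_mul]
    have hlast := sum_range_succ g m
    have hfirst := sum_range_succ' g m
    rw [hm, add_zero] at hlast
    rw [h0, add_zero] at hfirst
    rw [← hlast, hfirst]
  rw [hlhs, hrhs, hshift]

end

namespace PadicInt

variable {p : ℕ} [Fact p.Prime]

theorem toZMod_ringInverse (x : ℤ_[p]) : toZMod (Ring.inverse x) = (toZMod x)⁻¹ := by
  by_cases hx : IsUnit x
  · obtain ⟨v, rfl⟩ := hx
    rw [Ring.inverse_unit]
    exact eq_inv_of_mul_eq_one_left (by rw [← map_mul, Units.inv_mul, map_one])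
  · have h : toZMod x = 0 := by
      rw [← RingHom.mem_ker, ker_toZMod]
      exact hx
    rw [Ring.inverse_non_unit x hx, h, map_zero, inv_zero]

theorem natCast_dvd_of_map_toZMod_eq_zero {P : ℤ_[p][X]} (h : P.map toZMod = 0) :
    (p : ℤ_[p][X]) ∣ P := by
  have hP : P ∈ RingHom.ker (mapRingHom (toZMod : ℤ_[p] →+* ZMod p)) := h
  rwa [ker_mapRingHom, ker_toZMod, maximalIdeal_eq_span_p, Ideal.map_span, Set.image_singleton,
    Ideal.mem_span_singleton, map_natCast] at hP

end PadicInt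

open Polynomial in
theorem inductive_step_general (p : ℕ) [Fact p.Prime] (a n : ℕ)
    (hpn : ¬ p ∣ n) (hpn1 : ¬ p ∣ (n + 1)) :
    (p : Polynomial ℤ_[p]) ∣
      Polynomial.C (-(n : ℤ_[p])) *
          (∑ k ∈ Finset.Icc 1 (p ^ a - 1),
            Polynomial.C (Ring.inverse ((-(n : ℤ_[p])) ^ k)) * bellPoly ℤ_[p] k) -
        ((∑ k ∈ Finset.Icc 1 (p ^ a - 1),
            bellPoly ℤ_[p] k * X * Polynomial.C (Ring.inverse ((-(n : ℤ_[p]) - 1) ^ k))) -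
          X * ∑ l ∈ Finset.Icc 1 (p ^ a - 1),
            Polynomial.C (Ring.inverse ((-1 : ℤ_[p]) ^ l)) * bellPoly ℤ_[p] l) := by
  have hu0 : -(n : ZMod p) ≠ 0 := by
    rwa [neg_ne_zero, Ne, ZMod.natCast_eq_zero_iff]
  have hu1 : -(n : ZMod p) ≠ 1 := by
    rwa [Ne, neg_eq_iff_add_eq_zero, ← cast_succ, ZMod.natCast_eq_zero_iff]
  apply PadicInt.natCast_dvd_of_map_toZMod_eq_zero
  simp only [Polynomial.map_sub, Polynomial.map_mul, Polynomial.map_sum, map_C, map_X,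
    map_bellPoly, PadicInt.toZMod_ringInverse, map_pow, map_sub, map_neg, map_natCast, map_one,
    Polynomial.map_neg, Polynomial.map_natCast]
  rw [sub_eq_zero]
  simpa only [map_neg, map_natCast] using C_mul_sum_inv_pow_mul_bellPoly hu0 hu1 a

open Polynomial in
/-- The inductive step relation: for a prime `p` and `a, n ≥ 1` with `p ∤ n`, `p ∤ n+1`,
`-n·∑_{k=1}^{p^a-1} B_k(x)/(-n)^k ≡
  ∑_{k=1}^{p^a-1} B_k(x)·x/(-n-1)^k - x·∑_{l=1}^{p^a-1} B_l(x)/(-1)^l` mod `p·ℤ_p[x]`. -/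
theorem inductive_step (p : ℕ) [Fact p.Prime] (a n : ℕ) (ha : 0 < a) (hn : 0 < n)
    (hpn : ¬ p ∣ n) (hpn1 : ¬ p ∣ (n + 1)) :
    (p : Polynomial ℤ_[p]) ∣
      Polynomial.C (-(n : ℤ_[p])) *
          (∑ k ∈ Finset.Icc 1 (p ^ a - 1),
            Polynomial.C (Ring.inverse ((-(n : ℤ_[p])) ^ k)) * bellPoly ℤ_[p] k) -
        ((∑ k ∈ Finset.Icc 1 (p ^ a - 1),
            bellPoly ℤ_[p] k * X * Polynomial.C (Ring.inverse ((-(n : ℤ_[p]) - 1) ^ k))) -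
          X * ∑ l ∈ Finset.Icc 1 (p ^ a - 1),
            Polynomial.C (Ring.inverse ((-1 : ℤ_[p]) ^ l)) * bellPoly ℤ_[p] l) :=
  inductive_step_general p a n hpn hpn1
end
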